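/- Let φ, ψ ∈ F[X] be q-linearized polynomials of degree > 1 whose coefficients φ₀, ψ₀ of X satisfy ν(φ₀) = ν(ψ₀) = 0 (in particular φ₀, ψ₀ ≠ 0). Let f ∈ F[X] be a nonzero q-linearized polynomial such that f ∘ φ = ψ ∘ f. Then λ_ν(ψ) = V_f(λ_ν(φ)), where for a q-linearized h = Σ h_i X^{q^i} of degree > 1 with h₀ ≠ 0 one sets λ_ν(h) = −min{(ν(h_i) − ν(h₀))/(q^i − 1) : i ≥ 1, h_i ≠ 0}. -/

import Mathlib

/-!
Raising to the power `q` is additive in characteristic `p`, so the coefficient of `X^(q^n)` in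
`f ∘ g` is `∑_{i+j=n} fᵢ gⱼ^(q^i)`. Hence `ν` of that coefficient plus `q^n z` is at least
`V_f(V_g z)`. Equality holds at `n = I + J`, where `I` and `J` are the largest indices attaining
`V_f(V_g z)` and `V_g z`, because the `(I, J)` term is then strictly the smallest. So
`V_{f∘g} = V_f ∘ V_g`, and `f ∘ φ = ψ ∘ f` gives `V_f ∘ V_φ = V_ψ ∘ V_f`.

When `ν(h₀) = 0` we have `V_h(z) ≤ z`, with equality exactly when `z ≥ λ_ν(h)`. Thus
`μ = V_f(λ_ν(φ))` is fixed by `V_ψ`, so `λ_ν(ψ) ≤ μ`. For `z < λ_ν(φ)` we have `V_φ(z) < z`,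
and as `V_f` is strictly increasing, `V_ψ` does not fix `V_f(z)`, i.e. `V_f(z) < λ_ν(ψ)`.
Continuity of `V_f` then gives `μ ≤ λ_ν(ψ)`.
-/

open Polynomial

/-- A polynomial is `q`-linearized if it is of the form `Σ fᵢ X^(qⁱ)`. -/
def IsqLin {F : Type*} [Field F] (q : ℕ) (f : Polynomial F) : Prop :=
  ∀ n, f.coeff n ≠ 0 → ∃ i : ℕ, n = q ^ i

/-- The valuation polygon `V_f(z) = min { ν(fᵢ) + qⁱ z : fᵢ ≠ 0 }` of a nonzero
`q`-linearized polynomial. -/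
noncomputable def Vpoly {F : Type*} [Field F] (q : ℕ) (ν : F → ℚ) (f : Polynomial F)
    (z : ℝ) : ℝ :=
  sInf {y : ℝ | ∃ i : ℕ, f.coeff (q ^ i) ≠ 0 ∧
    y = (ν (f.coeff (q ^ i)) : ℝ) + (q : ℝ) ^ i * z}

/-- `λ_ν(h) = − min { (ν(hᵢ) − ν(h₀))/(qⁱ − 1) : i ≥ 1, hᵢ ≠ 0 }`. -/
noncomputable def lamNu {F : Type*} [Field F] (q : ℕ) (ν : F → ℚ) (h : Polynomial F) : ℝ :=
  - sInf {y : ℝ | ∃ i : ℕ, 1 ≤ i ∧ h.coeff (q ^ i) ≠ 0 ∧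
      y = ((ν (h.coeff (q ^ i)) : ℝ) - (ν (h.coeff 1) : ℝ)) / ((q : ℝ) ^ i - 1)}

open Finset

section Valuation

variable {F : Type*} [Field F]

open scoped Classical in
/-- `ν` is only constrained on `Fˣ`; putting `ν 0 = ⊤` turns it into an additive valuation, to
which Mathlib's ultrametric estimates for sums apply. -/
noncomputable def extendValuation (ν : F → ℚ)
    (hmul : ∀ x y : F, x ≠ 0 → y ≠ 0 → ν (x * y) = ν x + ν y)
    (hadd : ∀ x y : F, x ≠ 0 → y ≠ 0 → x + y ≠ 0 → min (ν x) (ν y) ≤ ν (x + y)) :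
    AddValuation F (WithTop ℝ) :=
  AddValuation.of (fun x => if x = 0 then ⊤ else ((ν x : ℝ) : WithTop ℝ)) (by simp)
    (by
      have h := hmul 1 1 one_ne_zero one_ne_zero
      rw [mul_one, left_eq_add] at h
      simp [h])
    (by
      intro x y
      by_cases hx : x = 0
      · simp [hx]
      by_cases hy : y = 0
      · simp [hy]
      by_cases hxy : x + y = 0
      · simp [hxy]
      simp only [hx, hy, hxy, if_false, ← WithTop.coe_min, WithTop.coe_le_coe]
      exact_mod_cast hadd x y hx hy hxy)
    (by
      intro x y
      by_cases hx : x = 0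
      · simp [hx]
      by_cases hy : y = 0
      · simp [hy]
      simp only [mul_eq_zero, hx, hy, or_self, if_false, ← WithTop.coe_add, WithTop.coe_eq_coe]
      exact_mod_cast hmul x y hx hy)

lemma extendValuation_apply {ν : F → ℚ}
    {hmul : ∀ x y : F, x ≠ 0 → y ≠ 0 → ν (x * y) = ν x + ν y}
    {hadd : ∀ x y : F, x ≠ 0 → y ≠ 0 → x + y ≠ 0 → min (ν x) (ν y) ≤ ν (x + y)}
    {x : F} (hx : x ≠ 0) :
    extendValuation ν hmul hadd x = ((ν x : ℝ) : WithTop ℝ) := by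
  simp [extendValuation, hx]

variable {ν : F → ℚ} (v : AddValuation F (WithTop ℝ))

lemma nu_mul_pow (hv : ∀ x ≠ 0, v x = ((ν x : ℝ) : WithTop ℝ)) {x y : F} (hx : x ≠ 0)
    (hy : y ≠ 0) (n : ℕ) : ν (x * y ^ n) = ν x + n * ν y := by
  have h := v.map_mul x (y ^ n)
  rw [v.map_pow, hv _ (mul_ne_zero hx (pow_ne_zero _ hy)), hv _ hx, hv _ hy, ← WithTop.coe_nsmul,
    ← WithTop.coe_add, WithTop.coe_eq_coe, nsmul_eq_mul] at h
  exact_mod_cast h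

lemma le_nu_sum (hv : ∀ x ≠ 0, v x = ((ν x : ℝ) : WithTop ℝ)) {ι : Type*} {s : Finset ι}
    {T : ι → F} {r : ℝ} (hr : ∀ i ∈ s, T i ≠ 0 → r ≤ ν (T i))
    (hs : ∑ i ∈ s, T i ≠ 0) :
    r ≤ ν (∑ i ∈ s, T i) := by
  have h := v.map_le_sum (s := s) (f := T) (g := (r : WithTop ℝ)) fun i hi => by
    by_cases hT : T i = 0
    · simp [hT]
    rw [hv _ hT, WithTop.coe_le_coe]
    exact_mod_cast hr i hi hT
  rwa [hv _ hs, WithTop.coe_le_coe] at h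

lemma nu_sum_eq_of_forall_lt (hv : ∀ x ≠ 0, v x = ((ν x : ℝ) : WithTop ℝ)) {ι : Type*}
    [DecidableEq ι] {s : Finset ι} {T : ι → F} {i₀ : ι} (hi₀ : i₀ ∈ s)
    (hT₀ : T i₀ ≠ 0)
    (h : ∀ i ∈ s, i ≠ i₀ → T i ≠ 0 → ν (T i₀) < ν (T i)) :
    ∑ i ∈ s, T i ≠ 0 ∧ ν (∑ i ∈ s, T i) = ν (T i₀) := by
  have hlt : ∀ i ∈ s.erase i₀, v (T i₀) < v (T i) := by
    intro i hi
    obtain ⟨hne, his⟩ := mem_erase.1 hi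
    by_cases hT : T i = 0
    · simp [hT, hv _ hT₀]
    rw [hv _ hT₀, hv _ hT, WithTop.coe_lt_coe]
    exact_mod_cast h i his hne hT
  have hsum : v (∑ i ∈ s, T i) = v (T i₀) := by
    rw [← add_sum_erase s T hi₀]
    exact v.map_add_eq_of_lt_left (v.map_lt_sum (by simp [hv _ hT₀]) hlt)
  have hs : ∑ i ∈ s, T i ≠ 0 := fun h0 => by simp [h0, hv _ hT₀] at hsum
  refine ⟨hs, ?_⟩
  rw [hv _ hs, hv _ hT₀, WithTop.coe_eq_coe] at hsum
  exact_mod_cast hsum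

end Valuation

section Polygon

variable {F : Type*} [Field F] {q : ℕ} {ν : F → ℚ} {f : F[X]}

open scoped Classical in
noncomputable def qSupport (q : ℕ) (f : F[X]) : Finset ℕ :=
  (range (f.natDegree + 1)).filter fun i => f.coeff (q ^ i) ≠ 0

lemma mem_qSupport (hq : 1 < q) {i : ℕ} : i ∈ qSupport q f ↔ f.coeff (q ^ i) ≠ 0 := by
  simp only [qSupport, mem_filter, mem_range, and_iff_right_iff_imp]
  intro h
  exact Nat.lt_succ_of_le ((Nat.lt_pow_self hq).le.trans (le_natDegree_of_ne_zero h))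

lemma IsqLin.exists_natDegree_eq (hf : IsqLin q f) (hf0 : f ≠ 0) :
    ∃ i, f.natDegree = q ^ i ∧ f.coeff (q ^ i) ≠ 0 := by
  obtain ⟨i, hi⟩ := hf _ (leadingCoeff_ne_zero.2 hf0)
  exact ⟨i, hi, hi ▸ leadingCoeff_ne_zero.2 hf0⟩

lemma qSupport_nonempty (hq : 1 < q) (hf : IsqLin q f) (hf0 : f ≠ 0) :
    (qSupport q f).Nonempty :=
  let ⟨i, _, hi⟩ := hf.exists_natDegree_eq hf0
  ⟨i, (mem_qSupport hq).2 hi⟩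

lemma Vpoly_eq_inf' (hq : 1 < q) (hne : (qSupport q f).Nonempty) (z : ℝ) :
    Vpoly q ν f z = (qSupport q f).inf' hne fun i => (ν (f.coeff (q ^ i)) : ℝ) + q ^ i * z := by
  rw [Vpoly, inf'_eq_csInf_image]
  congr 1
  ext y
  simp [mem_qSupport hq, eq_comm]

lemma Vpoly_le (hq : 1 < q) {i : ℕ} (hi : f.coeff (q ^ i) ≠ 0) (z : ℝ) :
    Vpoly q ν f z ≤ (ν (f.coeff (q ^ i)) : ℝ) + q ^ i * z := by
  have hi' := (mem_qSupport hq).2 hi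
  rw [Vpoly_eq_inf' hq ⟨i, hi'⟩]
  exact inf'_le _ hi'

lemma Vpoly_le_self (hq : 1 < q) (h1 : f.coeff 1 ≠ 0) (hν : ν (f.coeff 1) = 0) (z : ℝ) :
    Vpoly q ν f z ≤ z := by
  have h := Vpoly_le (ν := ν) hq (i := 0) (by rwa [Nat.pow_zero]) z
  rwa [Nat.pow_zero, hν, Rat.cast_zero, pow_zero, one_mul, zero_add] at h

lemma Vpoly_eq_of_forall_le {z a : ℝ}
    (hmem : ∃ n, f.coeff (q ^ n) ≠ 0 ∧ (ν (f.coeff (q ^ n)) : ℝ) + q ^ n * z = a)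
    (hle : ∀ n, f.coeff (q ^ n) ≠ 0 → a ≤ (ν (f.coeff (q ^ n)) : ℝ) + q ^ n * z) :
    Vpoly q ν f z = a := by
  refine IsLeast.csInf_eq ⟨?_, ?_⟩
  · obtain ⟨n, hn, rfl⟩ := hmem
    exact ⟨n, hn, rfl⟩
  · rintro y ⟨n, hn, rfl⟩
    exact hle n hn

lemma exists_Vpoly_eq (hq : 1 < q) (hf : IsqLin q f) (hf0 : f ≠ 0) (z : ℝ) :
    ∃ i, f.coeff (q ^ i) ≠ 0 ∧ Vpoly q ν f z = (ν (f.coeff (q ^ i)) : ℝ) + q ^ i * z := by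
  obtain ⟨i, hi, heq⟩ := exists_mem_eq_inf' (qSupport_nonempty hq hf hf0)
    fun i => (ν (f.coeff (q ^ i)) : ℝ) + q ^ i * z
  exact ⟨i, (mem_qSupport hq).1 hi, by rw [Vpoly_eq_inf' hq (qSupport_nonempty hq hf hf0), heq]⟩

lemma exists_max_Vpoly_eq (hq : 1 < q) (hf : IsqLin q f) (hf0 : f ≠ 0) (z : ℝ) :
    ∃ i, f.coeff (q ^ i) ≠ 0 ∧ Vpoly q ν f z = (ν (f.coeff (q ^ i)) : ℝ) + q ^ i * z ∧
      ∀ j, i < j → f.coeff (q ^ j) ≠ 0 →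
        Vpoly q ν f z < (ν (f.coeff (q ^ j)) : ℝ) + q ^ j * z := by
  classical
  obtain ⟨i₀, hi₀, h₀⟩ := exists_Vpoly_eq hq hf hf0 (ν := ν) z
  set M := (qSupport q f).filter fun i => Vpoly q ν f z = (ν (f.coeff (q ^ i)) : ℝ) + q ^ i * z
  have hM : M.Nonempty := ⟨i₀, mem_filter.2 ⟨(mem_qSupport hq).2 hi₀, h₀⟩⟩
  obtain ⟨hmem, heq⟩ := mem_filter.1 (M.max'_mem hM)
  refine ⟨M.max' hM, (mem_qSupport hq).1 hmem, heq, fun j hj hfj => ?_⟩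
  refine (Vpoly_le hq hfj z).lt_of_ne fun h => hj.not_ge ?_
  exact M.le_max' j (mem_filter.2 ⟨(mem_qSupport hq).2 hfj, h⟩)

lemma Vpoly_strictMono (hq : 1 < q) (hf : IsqLin q f) (hf0 : f ≠ 0) :
    StrictMono (Vpoly q ν f) := by
  intro z z' hz
  obtain ⟨i, hi, heq⟩ := exists_Vpoly_eq hq hf hf0 (ν := ν) z'
  have hqi : (0 : ℝ) < q ^ i := pow_pos (by exact_mod_cast hq.trans' one_pos) i
  calc Vpoly q ν f z ≤ (ν (f.coeff (q ^ i)) : ℝ) + q ^ i * z := Vpoly_le hq hi z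
    _ < (ν (f.coeff (q ^ i)) : ℝ) + q ^ i * z' := by gcongr
    _ = Vpoly q ν f z' := heq.symm

lemma continuous_Vpoly (hq : 1 < q) (hf : IsqLin q f) (hf0 : f ≠ 0) :
    Continuous (Vpoly q ν f) := by
  have hne := qSupport_nonempty hq hf hf0
  simp_rw [funext (Vpoly_eq_inf' (ν := ν) hq hne)]
  exact Continuous.finset_inf'_apply hne fun i _ => by fun_prop

end Polygon

section FixedPoints

variable {F : Type*} [Field F] {q : ℕ} {ν : F → ℚ} {h : F[X]}

lemma lamNu_eq_neg_inf' (hq : 1 < q) (hne : ((qSupport q h).filter (1 ≤ ·)).Nonempty) :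
    lamNu q ν h = -((qSupport q h).filter (1 ≤ ·)).inf' hne fun i =>
      ((ν (h.coeff (q ^ i)) : ℝ) - ν (h.coeff 1)) / ((q : ℝ) ^ i - 1) := by
  rw [lamNu, inf'_eq_csInf_image]
  congr 2
  ext y
  simp [mem_qSupport hq, and_assoc, and_left_comm, eq_comm]

lemma lamNu_le_iff (hq : 1 < q) (hh : IsqLin q h) (hd : 1 < h.natDegree)
    (hν : ν (h.coeff 1) = 0) {z : ℝ} :
    lamNu q ν h ≤ z ↔
      ∀ i, 1 ≤ i → h.coeff (q ^ i) ≠ 0 →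
        z ≤ (ν (h.coeff (q ^ i)) : ℝ) + q ^ i * z := by
  obtain ⟨d, hdeg, hd0⟩ := hh.exists_natDegree_eq (ne_zero_of_natDegree_gt hd)
  have hd1 : 1 ≤ d := Nat.one_le_iff_ne_zero.2 fun h0 => by simp [h0] at hdeg; omega
  have hne : ((qSupport q h).filter (1 ≤ ·)).Nonempty :=
    ⟨d, mem_filter.2 ⟨(mem_qSupport hq).2 hd0, hd1⟩⟩
  rw [lamNu_eq_neg_inf' hq hne, neg_le, le_inf'_iff]
  simp only [mem_filter, mem_qSupport hq, hν, Rat.cast_zero, sub_zero]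
  refine forall_congr' fun i => ⟨fun H hi1 hi => ?_, fun H ⟨hi, hi1⟩ => ?_⟩
  all_goals
    have hpos : (0 : ℝ) < (q : ℝ) ^ i - 1 := by
      have : (1 : ℝ) < (q : ℝ) ^ i := one_lt_pow₀ (by exact_mod_cast hq) (by omega)
      linarith
  · have := H ⟨hi, hi1⟩
    rw [le_div_iff₀ hpos] at this
    linarith
  · have := H hi1 hi
    rw [le_div_iff₀ hpos]
    linarith

lemma Vpoly_eq_self_iff (hq : 1 < q) (hh : IsqLin q h) (hd : 1 < h.natDegree)
    (h1 : h.coeff 1 ≠ 0) (hν : ν (h.coeff 1) = 0) {z : ℝ} :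
    Vpoly q ν h z = z ↔ lamNu q ν h ≤ z := by
  rw [lamNu_le_iff hq hh hd hν]
  refine ⟨fun hV i _ hi => hV.symm.trans_le (Vpoly_le hq hi z), fun H => ?_⟩
  refine (Vpoly_le_self hq h1 hν z).antisymm ?_
  have h1' : 0 ∈ qSupport q h := (mem_qSupport hq).2 (by rwa [Nat.pow_zero])
  rw [Vpoly_eq_inf' hq ⟨0, h1'⟩]
  refine le_inf' _ _ fun i hi => ?_
  rcases Nat.eq_zero_or_pos i with rfl | hi1
  · simp [hν]
  · exact H i hi1 ((mem_qSupport hq).1 hi)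

end FixedPoints

section Composition

variable {F : Type*} [Field F] {q p s : ℕ} {ν : F → ℚ} {f g : F[X]}

lemma Vpoly_Vpoly_le (hq1 : 1 < q) {i j : ℕ} (hfi : f.coeff (q ^ i) ≠ 0)
    (hgj : g.coeff (q ^ j) ≠ 0) (z : ℝ) :
    Vpoly q ν f (Vpoly q ν g z) ≤
      ν (f.coeff (q ^ i)) + q ^ i * ((ν (g.coeff (q ^ j)) : ℝ) + q ^ j * z) :=
  calc Vpoly q ν f (Vpoly q ν g z) ≤ ν (f.coeff (q ^ i)) + q ^ i * Vpoly q ν g z :=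
        Vpoly_le hq1 hfi _
    _ ≤ _ := by gcongr; exact Vpoly_le hq1 hgj z

lemma Vpoly_Vpoly_lt_of_ne (hq1 : 1 < q) {I J i j : ℕ} {z : ℝ}
    (hI : ∀ k, I < k → f.coeff (q ^ k) ≠ 0 →
      Vpoly q ν f (Vpoly q ν g z) < ν (f.coeff (q ^ k)) + q ^ k * Vpoly q ν g z)
    (hJ : ∀ k, J < k → g.coeff (q ^ k) ≠ 0 →
      Vpoly q ν g z < ν (g.coeff (q ^ k)) + q ^ k * z)
    (hij : i + j = I + J) (hne : (i, j) ≠ (I, J))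
    (hfi : f.coeff (q ^ i) ≠ 0) (hgj : g.coeff (q ^ j) ≠ 0) :
    Vpoly q ν f (Vpoly q ν g z) <
      ν (f.coeff (q ^ i)) + q ^ i * ((ν (g.coeff (q ^ j)) : ℝ) + q ^ j * z) := by
  rcases lt_or_ge I i with h | h
  · calc Vpoly q ν f (Vpoly q ν g z) < ν (f.coeff (q ^ i)) + q ^ i * Vpoly q ν g z :=
          hI i h hfi
      _ ≤ _ := by gcongr; exact Vpoly_le hq1 hgj z
  · have hj : J < j := by
      by_contra! hj
      exact hne (Prod.ext (by omega) (by omega))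
    calc Vpoly q ν f (Vpoly q ν g z) ≤ ν (f.coeff (q ^ i)) + q ^ i * Vpoly q ν g z :=
          Vpoly_le hq1 hfi _
      _ < _ := by
        have : (0 : ℝ) < q ^ i := pow_pos (by exact_mod_cast hq1.trans' one_pos) i
        gcongr
        exact hJ j hj hgj

variable [ExpChar F p]

lemma coeff_pow_qpow (hq : q = p ^ s) (hq1 : 1 < q) (i n : ℕ) :
    (g ^ q ^ i).coeff (q ^ n) = if i ≤ n then g.coeff (q ^ (n - i)) ^ q ^ i else 0 := by
  have e : q ^ i = p ^ (s * i) := by rw [hq, pow_mul]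
  rw [e, ← map_iterateFrobenius_expand, coeff_map,
    coeff_expand (by rw [← e]; exact pow_pos (by omega) i), ← e]
  simp only [Nat.pow_dvd_pow_iff_le_right hq1]
  split_ifs with h
  · rw [Nat.pow_div h (by omega), iterateFrobenius_def, ← e]
  · simp

lemma coeff_comp_qpow (hq : q = p ^ s) (hq1 : 1 < q) (hf : IsqLin q f) (n : ℕ) :
    (f.comp g).coeff (q ^ n) =
      ∑ x ∈ antidiagonal n, f.coeff (q ^ x.1) * g.coeff (q ^ x.2) ^ q ^ x.1 := by
  rw [comp_eq_sum_left, Polynomial.sum, finsetSum_coeff]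
  simp only [coeff_C_mul]
  symm
  refine sum_bij_ne_zero (fun x _ _ => q ^ x.1)
    (fun x _ hT => mem_support_iff.2 (left_ne_zero_of_mul hT))
    (fun x hx _ y hy _ hxy => ?_) (fun e he hT => ?_) (fun x hx _ => ?_)
  · have h1 := Nat.pow_right_injective hq1 hxy
    rw [HasAntidiagonal.mem_antidiagonal] at hx hy
    exact Prod.ext h1 (by omega)
  · obtain ⟨i, rfl⟩ := hf e (mem_support_iff.1 he)
    rw [coeff_pow_qpow hq hq1] at hT
    have hin : i ≤ n := by by_contra h; simp [h] at hT
    rw [if_pos hin] at hT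
    exact ⟨(i, n - i), HasAntidiagonal.mem_antidiagonal.2 (by omega), hT, rfl⟩
  · rw [HasAntidiagonal.mem_antidiagonal] at hx
    rw [coeff_pow_qpow hq hq1, if_pos (by omega), ← hx, Nat.add_sub_cancel_left]

lemma Vpoly_comp (hq : q = p ^ s) (hq1 : 1 < q) (v : AddValuation F (WithTop ℝ))
    (hv : ∀ x ≠ 0, v x = ((ν x : ℝ) : WithTop ℝ))
    (hf : IsqLin q f) (hf0 : f ≠ 0) (hg : IsqLin q g) (hg0 : g ≠ 0) (z : ℝ) :
    Vpoly q ν (f.comp g) z = Vpoly q ν f (Vpoly q ν g z) := by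
  classical
  set T : ℕ × ℕ → F := fun x => f.coeff (q ^ x.1) * g.coeff (q ^ x.2) ^ q ^ x.1
  set a := Vpoly q ν f (Vpoly q ν g z)
  have hT : ∀ x, T x ≠ 0 → f.coeff (q ^ x.1) ≠ 0 ∧ g.coeff (q ^ x.2) ≠ 0 ∧
      (ν (T x) : ℝ) + q ^ (x.1 + x.2) * z =
        ν (f.coeff (q ^ x.1)) + q ^ x.1 * ((ν (g.coeff (q ^ x.2)) : ℝ) + q ^ x.2 * z) := by
    intro x hx
    have hf' : f.coeff (q ^ x.1) ≠ 0 := left_ne_zero_of_mul hx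
    have hg' : g.coeff (q ^ x.2) ≠ 0 := fun h0 => hx <| by
      simp [T, h0, zero_pow (pow_pos (by omega : 0 < q) x.1).ne']
    refine ⟨hf', hg', ?_⟩
    rw [nu_mul_pow v hv hf' hg']
    push_cast
    ring
  -- With the largest minimizing indices, `(I, J)` is the only pair on the antidiagonal of `I + J`
  -- attaining the minimum, so its term cannot be cancelled.
  obtain ⟨J, hJ, hJeq, hJmax⟩ := exists_max_Vpoly_eq hq1 hg hg0 (ν := ν) z
  obtain ⟨I, hI, hIeq, hImax⟩ := exists_max_Vpoly_eq hq1 hf hf0 (ν := ν) (Vpoly q ν g z)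
  have hTIJ : T (I, J) ≠ 0 := mul_ne_zero hI (pow_ne_zero _ hJ)
  have hIJ : (ν (T (I, J)) : ℝ) + q ^ (I + J) * z = a := by
    rw [(hT _ hTIJ).2.2, ← hJeq, ← hIeq]
  have hlt : ∀ x ∈ antidiagonal (I + J), x ≠ (I, J) → T x ≠ 0 →
      ν (T (I, J)) < ν (T x) := by
    intro x hx hne hTx
    obtain ⟨hf', hg', he⟩ := hT x hTx
    rw [HasAntidiagonal.mem_antidiagonal] at hx
    have := Vpoly_Vpoly_lt_of_ne hq1 hImax hJmax hx hne hf' hg'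
    rw [hx] at he
    exact_mod_cast (show (ν (T (I, J)) : ℝ) < ν (T x) by linarith)
  obtain ⟨hne, heq⟩ :=
    nu_sum_eq_of_forall_lt v hv (HasAntidiagonal.mem_antidiagonal.2 rfl) hTIJ hlt
  refine Vpoly_eq_of_forall_le ⟨I + J, ?_, ?_⟩ fun n hn => ?_
  · rwa [coeff_comp_qpow hq hq1 hf]
  · rw [coeff_comp_qpow hq hq1 hf, heq, hIJ]
  · rw [coeff_comp_qpow hq hq1 hf] at hn ⊢
    have := le_nu_sum v hv (r := a - q ^ n * z) (fun x hx hTx => by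
      obtain ⟨hf', hg', he⟩ := hT x hTx
      rw [HasAntidiagonal.mem_antidiagonal] at hx
      have := Vpoly_Vpoly_le (ν := ν) hq1 hf' hg' z
      rw [hx] at he
      linarith) hn
    linarith

end Composition

lemma exists_expChar_card_eq_pow (K F : Type*) [Field K] [Fintype K] [Field F] [Algebra K F] :
    ∃ p s : ℕ, ExpChar F p ∧ Fintype.card K = p ^ s := by
  obtain ⟨p, _, n, hp, hcard⟩ := FiniteField.card' K
  have := charP_of_injective_algebraMap' K (A := F) p
  exact ⟨p, n, .prime hp, hcard⟩

theorem stmt5 {Fq F : Type*} [Field Fq] [Fintype Fq] [Field F] [Algebra Fq F]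
    (q : ℕ) (hq : q = Fintype.card Fq)
    (ν : F → ℚ)
    (hmul : ∀ x y : F, x ≠ 0 → y ≠ 0 → ν (x * y) = ν x + ν y)
    (hadd : ∀ x y : F, x ≠ 0 → y ≠ 0 → x + y ≠ 0 → min (ν x) (ν y) ≤ ν (x + y))
    (φ ψ : Polynomial F) (hφ : IsqLin q φ) (hψ : IsqLin q ψ)
    (hdφ : 1 < φ.natDegree) (hdψ : 1 < ψ.natDegree)
    (hφ0 : φ.coeff 1 ≠ 0) (hψ0 : ψ.coeff 1 ≠ 0)
    (hνφ : ν (φ.coeff 1) = 0) (hνψ : ν (ψ.coeff 1) = 0)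
    (f : Polynomial F) (hf : IsqLin q f) (hf0 : f ≠ 0)
    (hcomm : f.comp φ = ψ.comp f) :
    lamNu q ν ψ = Vpoly q ν f (lamNu q ν φ) := by
  have hq1 : 1 < q := hq ▸ Fintype.one_lt_card
  obtain ⟨p, s, _, hps⟩ := exists_expChar_card_eq_pow Fq F
  have hv (x : F) (hx : x ≠ 0) := extendValuation_apply (hmul := hmul) (hadd := hadd) hx
  have hconj (z : ℝ) : Vpoly q ν f (Vpoly q ν φ z) = Vpoly q ν ψ (Vpoly q ν f z) := by
    rw [← Vpoly_comp (hq.trans hps) hq1 _ hv hf hf0 hφ (ne_zero_of_natDegree_gt hdφ), hcomm,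
      Vpoly_comp (hq.trans hps) hq1 _ hv hψ (ne_zero_of_natDegree_gt hdψ) hf hf0]
  have hfixφ (z : ℝ) := Vpoly_eq_self_iff (ν := ν) (z := z) hq1 hφ hdφ hφ0 hνφ
  have hfixψ (z : ℝ) := Vpoly_eq_self_iff (ν := ν) (z := z) hq1 hψ hdψ hψ0 hνψ
  refine le_antisymm ?_ ?_
  · rw [← hfixψ, ← hconj, (hfixφ _).2 le_rfl]
  · have hbelow : ∀ z < lamNu q ν φ, Vpoly q ν f z < lamNu q ν ψ := by
      intro z hz
      by_contra! h
      have hVφ : Vpoly q ν φ z < z :=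
        (Vpoly_le_self hq1 hφ0 hνφ z).lt_of_ne (mt (hfixφ z).1 hz.not_ge)
      exact (Vpoly_strictMono hq1 hf hf0 hVφ).ne ((hconj z).trans ((hfixψ _).2 h))
    exact le_of_tendsto ((continuous_Vpoly hq1 hf hf0).tendsto _ |>.mono_left nhdsWithin_le_nhds)
      (eventually_nhdsWithin_of_forall (s := Set.Iio _) fun z hz => (hbelow z hz).le)
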